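/- Let D, D' be triangulated categories and Φ : D → D, Φ' : D' → D', Ψ : D → D' be exact functors such that Ψ∘Φ ≅ Φ'∘Ψ as functors. Let G be a split-generator of D such that Ψ G is a split-generator of D'. Then for every t ∈ ℝ and every n ≥ 1, δ_t(Ψ G, Φ'ⁿ(Ψ G)) ≤ δ_t(G, Φⁿ G), and consequently limsup_{n→∞} (1/n)·log δ_t(Ψ G, Φ'ⁿ(Ψ G)) ≤ limsup_{n→∞} (1/n)·log δ_t(G, Φⁿ G). (In terms of categorical entropy, h_t(Φ) ≥ h_t(Φ').) -/

import Mathlib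

open CategoryTheory CategoryTheory.Limits CategoryTheory.Pretriangulated Filter
open scoped ENNReal

universe v₁ v₂ u₁ u₂

variable {D : Type u₁} [Category.{v₁} D] [Preadditive D] [HasZeroObject D]
  [HasShift D ℤ] [∀ n : ℤ, (shiftFunctor D n).Additive] [Pretriangulated D]

/-- An object `F` admits a cone decomposition with the given list of components. -/
inductive ConeDecomp : D → List D → Prop
  | nil {F : D} (h : IsZero F) : ConeDecomp F []
  | step {X : D} (F : D) {l : List D} (A : D) (hX : ConeDecomp X l)
      (f : X ⟶ F) (g : F ⟶ A) (h : A ⟶ X⟦(1 : ℤ)⟧)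
      (ht : Triangle.mk f g h ∈ distTriang D) : ConeDecomp F (l ++ [A])

open scoped Classical in
/-- The categorical complexity `δ_t(E,F)`. -/
noncomputable def catDelta [HasBinaryBiproducts D] (t : ℝ) (E F : D) : ℝ≥0∞ :=
  if IsZero F then 0
  else sInf {x : ℝ≥0∞ | ∃ (ns : List ℤ) (F' : D),
      ns ≠ [] ∧ ConeDecomp (F ⊞ F') (ns.map fun n => E⟦n⟧) ∧
      x = (ns.map fun n => ENNReal.ofReal (Real.exp ((n : ℝ) * t))).sum}

/-- Objects split-generated by `G`. -/
inductive SplitGen (G : D) : D → Prop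
  | self : SplitGen G G
  | zero {X : D} (h : IsZero X) : SplitGen G X
  | ofIso {X Y : D} (e : X ≅ Y) (h : SplitGen G X) : SplitGen G Y
  | shift {X : D} (n : ℤ) (h : SplitGen G X) : SplitGen G (X⟦n⟧)
  | cone₂ {X Y Z : D} (f : X ⟶ Y) (g : Y ⟶ Z) (h : Z ⟶ X⟦(1 : ℤ)⟧)
      (ht : Triangle.mk f g h ∈ distTriang D) (hX : SplitGen G X) (hZ : SplitGen G Z) :
      SplitGen G Y
  | summand {X Y : D} (s : X ⟶ Y) (p : Y ⟶ X) (hsp : s ≫ p = 𝟙 X)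
      (h : SplitGen G Y) : SplitGen G X

/-- `G` is a split-generator. -/
def IsSplitGenerator (G : D) : Prop := ∀ X : D, SplitGen G X

/-!
Since `Ψ ∘ Φⁿ ≅ Φ'ⁿ ∘ Ψ`, the object `Φ'ⁿ(Ψ G)` is isomorphic to `Ψ(Φⁿ G)`. An exact functor
carries a cone decomposition of `Φⁿ G ⊕ F'` with components `G[nᵢ]` to one of
`Ψ(Φⁿ G) ⊕ Ψ F'` with components `(Ψ G)[nᵢ]`, so every cost admissible for `δ_t(G, Φⁿ G)` is
admissible for `δ_t(Ψ G, Φ'ⁿ(Ψ G))`. The limsup inequality follows termwise.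
-/

theorem List.Forall₂.exists_of_append_singleton_left {α β : Type*} {R : α → β → Prop}
    {l : List α} {a : α} {l' : List β} (h : List.Forall₂ R (l ++ [a]) l') :
    ∃ u b, l' = u ++ [b] ∧ List.Forall₂ R l u ∧ R a b := by
  rw [← List.forall₂_reverse_iff, List.reverse_append, List.reverse_singleton,
    List.singleton_append, List.forall₂_cons_left_iff] at h
  obtain ⟨b, u, hab, hu, hl'⟩ := h
  refine ⟨u.reverse, b, ?_, ?_, hab⟩
  · rw [← List.reverse_reverse l', hl', List.reverse_cons]
  · rwa [← List.forall₂_reverse_iff, List.reverse_reverse]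

theorem ConeDecomp.of_iso {F F' : D} {l l' : List D} (h : ConeDecomp F l) (e : F ≅ F')
    (hl : List.Forall₂ (fun A B => Nonempty (A ≅ B)) l l') : ConeDecomp F' l' := by
  induction h generalizing F' l' with
  | nil hF =>
    rw [List.forall₂_nil_left_iff.mp hl]
    exact ConeDecomp.nil (hF.of_iso e.symm)
  | @step X F l A _ f g h ht ih =>
    obtain ⟨u, B, rfl, hu, ⟨iA⟩⟩ := hl.exists_of_append_singleton_left
    refine ConeDecomp.step F' B (ih (Iso.refl X) hu) (f ≫ e.hom) (e.inv ≫ g ≫ iA.hom)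
      (iA.inv ≫ h) (isomorphic_distinguished _ ht _ ?_)
    exact Triangle.isoMk _ _ (Iso.refl X) e.symm iA.symm
      (by simp [Triangle.mk]) (by simp [Triangle.mk]) (by simp [Triangle.mk])

theorem forall₂_nonempty_iso_map {C ι : Type*} [Category C] {f g : ι → C} (i : ∀ n, f n ≅ g n)
    (l : List ι) :
    List.Forall₂ (fun A B : C => Nonempty (A ≅ B)) (l.map f) (l.map g) := by
  simpa [List.forall₂_map_left_iff, List.forall₂_map_right_iff, List.forall₂_same]
    using fun n _ => ⟨i n⟩

section

variable {D' : Type u₂} [Category.{v₂} D'] [Preadditive D'] [HasZeroObject D'] [HasShift D' ℤ]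
  [∀ n : ℤ, (shiftFunctor D' n).Additive] [Pretriangulated D']

theorem ConeDecomp.map (Ψ : D ⥤ D') [Ψ.CommShift ℤ] [Ψ.IsTriangulated]
    {F : D} {l : List D} (h : ConeDecomp F l) :
    ConeDecomp (Ψ.obj F) (l.map Ψ.obj) := by
  induction h with
  | nil hF => exact ConeDecomp.nil (Ψ.map_isZero hF)
  | @step X F l A _ f g h ht ih =>
    rw [List.map_append, List.map_singleton]
    exact ConeDecomp.step (Ψ.obj F) (Ψ.obj A) ih (Ψ.map f) (Ψ.map g)
      (Ψ.map h ≫ (Ψ.commShiftIso (1 : ℤ)).hom.app X) (Ψ.map_distinguished _ ht)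

theorem catDelta_map_le [HasBinaryBiproducts D] [HasBinaryBiproducts D']
    (Ψ : D ⥤ D') [Ψ.CommShift ℤ] [Ψ.IsTriangulated] (t : ℝ) (E F : D) :
    catDelta t (Ψ.obj E) (Ψ.obj F) ≤ catDelta t E F := by
  unfold catDelta
  by_cases hF : IsZero F
  · simp [hF, Ψ.map_isZero hF]
  rw [if_neg hF]
  split_ifs
  · exact zero_le
  refine sInf_le_sInf ?_
  rintro x ⟨ns, F', hns, hcd, rfl⟩
  refine ⟨ns, Ψ.obj F', hns, ?_, rfl⟩
  have : PreservesBinaryBiproduct F F' Ψ :=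
    preservesBinaryBiproduct_of_preservesBiproduct Ψ F F'
  have hΨcd := hcd.map Ψ
  rw [List.map_map] at hΨcd
  exact hΨcd.of_iso (Ψ.mapBiprod F F')
    (forall₂_nonempty_iso_map (fun n => (Ψ.commShiftIso n).app E) ns)

end

theorem catDelta_le_of_iso [HasBinaryBiproducts D] (t : ℝ) (E : D) {F F' : D} (i : F ≅ F') :
    catDelta t E F ≤ catDelta t E F' := by
  unfold catDelta
  by_cases hF' : IsZero F'
  · simp [hF', hF'.of_iso i]
  rw [if_neg (fun hF => hF' (hF.of_iso i.symm)), if_neg hF']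
  refine sInf_le_sInf ?_
  rintro x ⟨ns, F'', hns, hcd, rfl⟩
  exact ⟨ns, F'', hns, hcd.of_iso (biprod.mapIso i.symm (Iso.refl F''))
    (forall₂_nonempty_iso_map (fun _ => Iso.refl _) ns), rfl⟩

theorem nonempty_iso_iterate_obj {C C' : Type*} [Category C] [Category C']
    {Φ : C ⥤ C} {Φ' : C' ⥤ C'} {Ψ : C ⥤ C'} (e : Φ ⋙ Ψ ≅ Ψ ⋙ Φ') (X : C) (n : ℕ) :
    Nonempty (Ψ.obj ((Φ.obj)^[n] X) ≅ (Φ'.obj)^[n] (Ψ.obj X)) := by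
  induction n with
  | zero => exact ⟨Iso.refl _⟩
  | succ n ih =>
    obtain ⟨i⟩ := ih
    rw [Function.iterate_succ_apply', Function.iterate_succ_apply']
    exact ⟨e.app _ ≪≫ Φ'.mapIso i⟩

theorem limsup_inv_mul_log_le_limsup {u v : ℕ → ℝ≥0∞} (h : ∀ n, u n ≤ v n) :
    limsup (fun n : ℕ => ((n : ℝ)⁻¹ : EReal) * ENNReal.log (u n)) atTop ≤
      limsup (fun n : ℕ => ((n : ℝ)⁻¹ : EReal) * ENNReal.log (v n)) atTop :=
  limsup_le_limsup (Eventually.of_forall fun n =>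
    mul_le_mul_of_nonneg_left (ENNReal.log_monotone (h n))
      (EReal.coe_nonneg.mpr (inv_nonneg.mpr n.cast_nonneg)))

/-- Lemma 2.5: if `Ψ ∘ Φ ≅ Φ' ∘ Ψ` and `Ψ G` is a split-generator, then `h_t(Φ) ≥ h_t(Φ')`. -/
theorem entropy_ge_of_intertwine [HasBinaryBiproducts D]
    {D' : Type u₂} [Category.{v₂} D'] [Preadditive D'] [HasZeroObject D'] [HasShift D' ℤ]
    [∀ n : ℤ, (shiftFunctor D' n).Additive] [Pretriangulated D'] [HasBinaryBiproducts D']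
    (Φ : D ⥤ D) [Φ.CommShift ℤ] [Φ.IsTriangulated]
    (Φ' : D' ⥤ D') [Φ'.CommShift ℤ] [Φ'.IsTriangulated]
    (Ψ : D ⥤ D') [Ψ.CommShift ℤ] [Ψ.IsTriangulated]
    (e : Φ ⋙ Ψ ≅ Ψ ⋙ Φ')
    (G : D) (hG : IsSplitGenerator G) (hΨG : IsSplitGenerator (Ψ.obj G)) (t : ℝ) :
    (∀ n : ℕ, 1 ≤ n →
      catDelta t (Ψ.obj G) ((Φ'.obj)^[n] (Ψ.obj G)) ≤ catDelta t G ((Φ.obj)^[n] G)) ∧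
    limsup (fun n : ℕ => ((n : ℝ)⁻¹ : EReal) *
        ENNReal.log (catDelta t (Ψ.obj G) ((Φ'.obj)^[n] (Ψ.obj G)))) atTop ≤
      limsup (fun n : ℕ => ((n : ℝ)⁻¹ : EReal) *
        ENNReal.log (catDelta t G ((Φ.obj)^[n] G))) atTop := by
  have hdelta : ∀ n : ℕ,
      catDelta t (Ψ.obj G) ((Φ'.obj)^[n] (Ψ.obj G)) ≤ catDelta t G ((Φ.obj)^[n] G) := by
    intro n
    obtain ⟨i⟩ := nonempty_iso_iterate_obj e G n
    exact (catDelta_le_of_iso t _ i.symm).trans (catDelta_map_le Ψ t G _)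
  exact ⟨fun n _ => hdelta n, limsup_inv_mul_log_le_limsup hdelta⟩
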